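/- Let P be a generalized parity complex and let {x_1,…,x_k} = U ⊆ P_{n+1}. Suppose X = E_1[x_1] ∘_n ⋯ ∘_n E_k[x_k] is an (n+1)-cell expressed as an n-composite of atoms in n-contexts. Then for all indices i, j with 1 ≤ i, j ≤ k, x_i ◁_U x_j implies i < j; in other words, the enumeration (x_1,…,x_k) is a linear extension of (U, ◁_U). -/
import Mathlib


/-- An ω-hypergraph: a graded set together with, for each generator of dimension `n+1`,
finite sets of source and target generators of dimension `n`. -/
structure OHG where
  gen : ℕ → Type
  deceq : ∀ n, DecidableEq (gen n)
  src : ∀ {n : ℕ}, gen (n + 1) → Finset (gen n)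
  tgt : ∀ {n : ℕ}, gen (n + 1) → Finset (gen n)

attribute [instance] OHG.deceq

namespace OHG

/-- `S⁻`. -/
def setSrc (P : OHG) {n : ℕ} (S : Finset (P.gen (n + 1))) : Finset (P.gen n) :=
  S.biUnion P.src

/-- `S⁺`. -/
def setTgt (P : OHG) {n : ℕ} (S : Finset (P.gen (n + 1))) : Finset (P.gen n) :=
  S.biUnion P.tgt

/-- `S∓ = S⁻ \ S⁺`. -/
def mp (P : OHG) {n : ℕ} (S : Finset (P.gen (n + 1))) : Finset (P.gen n) :=
  P.setSrc S \ P.setTgt S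

/-- `S± = S⁺ \ S⁻`. -/
def pm (P : OHG) {n : ℕ} (S : Finset (P.gen (n + 1))) : Finset (P.gen n) :=
  P.setTgt S \ P.setSrc S

/-- `S` moves `U` to `V`. -/
def Moves (P : OHG) {n : ℕ} (S : Finset (P.gen (n + 1))) (U V : Finset (P.gen n)) : Prop :=
  V = (U ∪ P.setTgt S) \ P.setSrc S ∧ U = (V ∪ P.setSrc S) \ P.setTgt S

/-- Fork-freeness of a set of `n`-generators. -/
def ForkFree (P : OHG) : ∀ n : ℕ, Finset (P.gen n) → Prop
  | 0, U => U.card = 1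
  | _ + 1, U => ∀ x ∈ U, ∀ y ∈ U, x ≠ y →
      P.src x ∩ P.src y = ∅ ∧ P.tgt x ∩ P.tgt y = ∅

/-- An `n`-pre-cell: finite sets `X_{i,−}`, `X_{i,+}` of `i`-generators for `i ≤ n`,
with a single top-dimensional set `X_n = X_{n,−} = X_{n,+}`. -/
structure PreCell (P : OHG) (n : ℕ) where
  neg : ∀ i : ℕ, i ≤ n → Finset (P.gen i)
  pos : ∀ i : ℕ, i ≤ n → Finset (P.gen i)
  top_eq : neg n le_rfl = pos n le_rfl

/-- The top-dimensional set `X_n` of a pre-cell. -/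
def PreCell.top {P : OHG} {n : ℕ} (X : P.PreCell n) : Finset (P.gen n) :=
  X.neg n le_rfl

/-- `X` is an `n`-cell: all its sets are fork-free and each `X_{i+1,ε}` moves
`X_{i,−}` to `X_{i,+}`. -/
def IsCell (P : OHG) {n : ℕ} (X : P.PreCell n) : Prop :=
  (∀ (i : ℕ) (h : i ≤ n), P.ForkFree i (X.neg i h) ∧ P.ForkFree i (X.pos i h)) ∧
  (∀ (i : ℕ) (h : i + 1 ≤ n),
    P.Moves (X.neg (i + 1) h) (X.neg i (by omega)) (X.pos i (by omega)) ∧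
    P.Moves (X.pos (i + 1) h) (X.neg i (by omega)) (X.pos i (by omega)))

/-- Transport of a set of generators along an equality of dimensions. -/
def castSet (P : OHG) {i j : ℕ} (e : i = j) (S : Finset (P.gen i)) : Finset (P.gen j) :=
  e ▸ S

/-- One step of the atom boundary: `S∓` for `ε = −`, `S±` for `ε = +`. -/
def bd (P : OHG) (ε : Bool) {i : ℕ} (S : Finset (P.gen (i + 1))) : Finset (P.gen i) :=
  if ε then P.pm S else P.mp S

/-- The `k`-fold iterated atom boundary. -/
def iterBd (P : OHG) (ε : Bool) : ∀ (k : ℕ) {i : ℕ}, Finset (P.gen (i + k)) → Finset (P.gen i)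
  | 0, _, S => S
  | k + 1, _, S => iterBd P ε k (P.bd ε S)

/-- `⟨x⟩_{i,ε}`, the `(i,ε)`-component of the atom of the generator `x`. -/
def atomSide (P : OHG) {n : ℕ} (x : P.gen n) (ε : Bool) (i : ℕ) (_h : i ≤ n) :
    Finset (P.gen i) :=
  P.iterBd ε (n - i) (P.castSet (by omega : n = i + (n - i)) {x})

theorem iterBd_eq_of_zero (P : OHG) (ε : Bool) {k i : ℕ} (hk : k = 0)
    (S : Finset (P.gen (i + k))) :
    P.iterBd ε k S = P.castSet (by omega : i + k = i) S := by
  subst hk; rfl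

/-- The atom `⟨x⟩` of a generator `x`. -/
def atom (P : OHG) {n : ℕ} (x : P.gen n) : P.PreCell n where
  neg := fun i h => P.atomSide x false i h
  pos := fun i h => P.atomSide x true i h
  top_eq := by
    simp only [OHG.atomSide]
    rw [P.iterBd_eq_of_zero false (Nat.sub_self n), P.iterBd_eq_of_zero true (Nat.sub_self n)]

/-- `x ◁¹_U y`. -/
def tlone (P : OHG) {n : ℕ} (U : Finset (P.gen (n + 1))) (x y : P.gen (n + 1)) : Prop :=
  x ∈ U ∧ y ∈ U ∧ (P.tgt x ∩ P.src y).Nonempty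

/-- `x ◁_U y`, the transitive closure of `◁¹_U`. -/
def tl (P : OHG) {n : ℕ} (U : Finset (P.gen (n + 1))) :
    P.gen (n + 1) → P.gen (n + 1) → Prop :=
  Relation.TransGen (P.tlone U)

/-- `S ◁_U T` for subsets. -/
def tlSet (P : OHG) {n : ℕ} (U S T : Finset (P.gen (n + 1))) : Prop :=
  ∃ s ∈ S, ∃ t ∈ T, P.tl U s t

/-- Axiom (F1): acyclicity of `◁` on each `P_n`. -/
def Acyclic (P : OHG) : Prop :=
  ∀ (n : ℕ) (x : P.gen (n + 1)),
    ¬ Relation.TransGen (fun a b : P.gen (n + 1) => (P.tgt a ∩ P.src b).Nonempty) x x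

/-- Axiom (F0): non-emptiness of sources and targets. -/
def NonEmptySrcTgt (P : OHG) : Prop :=
  ∀ (n : ℕ) (x : P.gen (n + 1)), (P.src x).Nonempty ∧ (P.tgt x).Nonempty

/-- Axiom (F2): every atom is a cell. -/
def Relevant (P : OHG) : Prop := ∀ (n : ℕ) (x : P.gen n), P.IsCell (P.atom x)

/-- `V` is a segment for `◁_U`. -/
def IsSegment (P : OHG) {n : ℕ} (U V : Finset (P.gen (n + 1))) : Prop :=
  ∀ x y z : P.gen (n + 1), x ∈ V → z ∈ V → P.tl U x y → P.tl U y z → y ∈ V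

/-- The segment condition for a generator `x`: for every lower-dimensional cell `X`
containing `⟨x⟩_{n,ε}` in its top set, `⟨x⟩_{n,ε}` is a segment for `◁_{X_n}`. -/
def SegmentCond (P : OHG) {m : ℕ} (x : P.gen m) : Prop :=
  ∀ (n : ℕ) (h : n + 1 < m) (X : P.PreCell (n + 1)), P.IsCell X →
    ∀ ε : Bool, P.atomSide x ε (n + 1) (le_of_lt h) ⊆ X.top →
      P.IsSegment X.top (P.atomSide x ε (n + 1) (le_of_lt h))

/-- `y ⊴₁ z` : some generator has `y` in its source and `z` in its target. -/
def jtlone (P : OHG) {k : ℕ} (y z : P.gen k) : Prop :=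
  ∃ w : P.gen (k + 1), y ∈ P.src w ∧ z ∈ P.tgt w

/-- `⊴`, the reflexive transitive closure of `⊴₁`. -/
def jtl (P : OHG) {k : ℕ} : P.gen k → P.gen k → Prop :=
  Relation.ReflTransGen fun a b => P.jtlone a b

/-- `S ⊴ T` for subsets. -/
def jtlSet (P : OHG) {k : ℕ} (S T : Finset (P.gen k)) : Prop :=
  ∃ s ∈ S, ∃ t ∈ T, P.jtl s t

/-- `x` and `y` are in torsion with respect to the `(k+1)`-cell `Z`. -/
def InTorsion (P : OHG) {k i j : ℕ} (hik : k + 1 < i) (hjk : k + 1 < j)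
    (x : P.gen i) (y : P.gen j) (Z : P.PreCell (k + 1)) : Prop :=
  P.atomSide x true (k + 1) (le_of_lt hik) ⊆ Z.top ∧
  P.atomSide y false (k + 1) (le_of_lt hjk) ⊆ Z.top ∧
  P.atomSide x true (k + 1) (le_of_lt hik) ∩ P.atomSide y false (k + 1) (le_of_lt hjk) = ∅ ∧
  P.tlSet Z.top (P.atomSide x true (k + 1) (le_of_lt hik))
    (P.atomSide y false (k + 1) (le_of_lt hjk)) ∧
  P.tlSet Z.top (P.atomSide y false (k + 1) (le_of_lt hjk))
    (P.atomSide x true (k + 1) (le_of_lt hik))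

/-- The gluing of the `n`-cell `X` on the set `G` of `(n+1)`-generators. -/
def gluing (P : OHG) {n : ℕ} (X : P.PreCell n) (G : Finset (P.gen (n + 1))) :
    P.PreCell (n + 1) where
  neg := fun i _h =>
    if h' : i ≤ n then X.neg i h' else P.castSet (by omega : n + 1 = i) G
  pos := fun i _h =>
    if h' : i ≤ n then
      (if h'' : i = n then
        P.castSet h''.symm ((X.top ∪ P.setTgt G) \ P.setSrc G)
      else X.pos i h')
    else P.castSet (by omega : n + 1 = i) G
  top_eq := by
    have hn : ¬ (n + 1 ≤ n) := by omega
    beta_reduce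
    rw [dif_neg hn, dif_neg hn]

/-- The activation of `G` on `X`: the `n`-target of the gluing. -/
def activation (P : OHG) {n : ℕ} (X : P.PreCell n) (G : Finset (P.gen (n + 1))) :
    P.PreCell n where
  neg := fun i h =>
    if h'' : i = n then P.castSet h''.symm ((X.top ∪ P.setTgt G) \ P.setSrc G)
    else X.neg i h
  pos := fun i h =>
    if h'' : i = n then P.castSet h''.symm ((X.top ∪ P.setTgt G) \ P.setSrc G)
    else X.pos i h
  top_eq := by beta_reduce; rw [dif_pos rfl, dif_pos rfl]

/-- The `i`-composite of two `n`-pre-cells (`i < n`). -/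
def compAt (P : OHG) {n : ℕ} (i : ℕ) (hlt : i < n) (X Y : P.PreCell n) : P.PreCell n where
  neg := fun j h => if i < j then X.neg j h ∪ Y.neg j h else X.neg j h
  pos := fun j h =>
    if i < j then X.pos j h ∪ Y.pos j h else if j = i then Y.pos j h else X.pos j h
  top_eq := by
    simp only [if_pos hlt]
    rw [X.top_eq, Y.top_eq]

/-- `X` and `Y` are `i`-composable: the `i`-target of `X` is the `i`-source of `Y`. -/
def ComposableAt (P : OHG) {n : ℕ} (i : ℕ) (hi : i ≤ n) (X Y : P.PreCell n) : Prop :=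
  X.pos i hi = Y.neg i hi ∧
  ∀ j (_hj : j < i),
    X.neg j (by omega) = Y.neg j (by omega) ∧ X.pos j (by omega) = Y.pos j (by omega)

/-- The closure relation `⊲*` between generators of possibly different dimensions:
`Below P x y` when `x` can be reached from `y` by a downward chain of
source/target memberships. -/
inductive Below (P : OHG) : ∀ {a b : ℕ}, P.gen a → P.gen b → Prop
  | refl {a : ℕ} (x : P.gen a) : Below P x x
  | step {a b : ℕ} {x : P.gen a} {y : P.gen b} {z : P.gen (b + 1)} :
      Below P x y → (y ∈ P.src z ∨ y ∈ P.tgt z) → Below P x z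

/-- `g` is maximal in `∪X`: every element of `∪X` lying above `g` for the closure
relation is `g` itself. -/
def MaximalIn (P : OHG) {n : ℕ} (X : P.PreCell n) {m : ℕ} (_hm : m ≤ n) (g : P.gen m) :
    Prop :=
  ∀ (b : ℕ) (hb : b ≤ n) (y : P.gen b),
    (y ∈ X.neg b hb ∨ y ∈ X.pos b hb) → Below P g y → HEq g y

/-- The `i`-th component of the rank of an `n`-pre-cell:
`|X_{i,−} ∩ X_{i,+}|` for `i < n`, and `|X_n|` for `i = n`. -/
def rank (P : OHG) {n : ℕ} (X : P.PreCell n) (i : ℕ) (h : i ≤ n) : ℕ :=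
  if i = n then X.top.card else (X.neg i h ∩ X.pos i h).card

/-- The lexicographic order on ranks, where later coordinates dominate. -/
def rankLt (P : OHG) {n : ℕ} (X Y : P.PreCell n) : Prop :=
  ∃ (k : ℕ) (hk : k ≤ n), 1 ≤ k ∧ P.rank X k hk < P.rank Y k hk ∧
    ∀ (i : ℕ) (hi : i ≤ n), k < i → P.rank X i hi = P.rank Y i hi

/-- The identity `(n+1)`-pre-cell on an `n`-pre-cell. -/
def unitCell (P : OHG) {n : ℕ} (X : P.PreCell n) : P.PreCell (n + 1) where
  neg := fun i _h =>
    if h' : i ≤ n then X.neg i h'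
    else P.castSet (by omega : n + 1 = i) (∅ : Finset (P.gen (n + 1)))
  pos := fun i _h =>
    if h' : i ≤ n then X.pos i h'
    else P.castSet (by omega : n + 1 = i) (∅ : Finset (P.gen (n + 1)))
  top_eq := by
    have hn : ¬ (n + 1 ≤ n) := by omega
    beta_reduce
    rw [dif_neg hn, dif_neg hn]

/-- Iterated identities. -/
def unitIter (P : OHG) : ∀ (d : ℕ) {m : ℕ}, P.PreCell m → P.PreCell (m + d)
  | 0, _, X => X
  | d + 1, _, X => P.unitCell (unitIter P d X)

/-- Transport of a pre-cell along an equality of dimensions. -/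
def castCell (P : OHG) {a b : ℕ} (e : a = b) (X : P.PreCell a) : P.PreCell b :=
  e ▸ X

/-- An `a`-pre-cell regarded as a `b`-pre-cell (`a ≤ b`) via iterated identities. -/
def liftTo (P : OHG) {a b : ℕ} (h : a ≤ b) (X : P.PreCell a) : P.PreCell b :=
  P.castCell (by omega : a + (b - a) = b) (P.unitIter (b - a) X)

/-- An `n`-context: for each `j < n`, a pair of `(j+1)`-pre-cells used to whisker at
level `j`. -/
structure Context (P : OHG) (n : ℕ) where
  left : ∀ j : ℕ, j < n → P.PreCell (j + 1)
  right : ∀ j : ℕ, j < n → P.PreCell (j + 1)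

/-- Partial evaluation of a context on an atom: whiskering of `⟨x⟩` by the context cells
of dimensions `≤ k`. -/
def evalAux (P : OHG) {n : ℕ} (E : P.Context n) (x : P.gen (n + 1)) :
    (k : ℕ) → k ≤ n → P.PreCell (n + 1)
  | 0, _ => P.atom x
  | k + 1, h =>
      P.compAt k (by omega)
        (P.compAt k (by omega)
          (P.liftTo (by omega) (E.left k h))
          (evalAux P E x k (by omega)))
        (P.liftTo (by omega) (E.right k h))

/-- The evaluation `E[x]` of an `n`-context `E` on the atom of the `(n+1)`-generator
`x`:  `E[x] = x_n ∘_{n−1} (⋯ (x_1 ∘_0 ⟨x⟩ ∘_0 x'_1) ⋯) ∘_{n−1} x'_n`. -/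
def evalCtx (P : OHG) {n : ℕ} (E : P.Context n) (x : P.gen (n + 1)) : P.PreCell (n + 1) :=
  P.evalAux E x n le_rfl

end OHG

namespace OHG

variable (P : OHG)

theorem castSet_id' {i : ℕ} (e : i = i) (S : Finset (P.gen i)) : P.castSet e S = S := rfl

theorem castSet_castSet' {i j k : ℕ} (e : i = j) (f : j = k) (S : Finset (P.gen i)) :
    P.castSet f (P.castSet e S) = P.castSet (e.trans f) S := by subst e; subst f; rfl

theorem castSet_empty' {i j : ℕ} (e : i = j) :
    P.castSet e (∅ : Finset (P.gen i)) = ∅ := by subst e; rfl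

theorem iterBd_one' (ε : Bool) {k i : ℕ} (hk : k = 1) (S : Finset (P.gen (i + k))) :
    P.iterBd ε k S = P.bd ε (P.castSet (by omega : i + k = i + 1) S) := by
  subst hk; rfl

theorem atomSide_self' {m : ℕ} (x : P.gen m) (ε : Bool) (h : m ≤ m) :
    P.atomSide x ε m h = {x} := by
  unfold atomSide
  rw [P.iterBd_eq_of_zero ε (Nat.sub_self m), P.castSet_castSet', P.castSet_id']

theorem atomSide_pred' {m : ℕ} (x : P.gen (m + 1)) (ε : Bool) (h : m ≤ m + 1) :
    P.atomSide x ε m h = P.bd ε {x} := by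
  unfold atomSide
  rw [P.iterBd_one' ε (by omega : m + 1 - m = 1), P.castSet_castSet', P.castSet_id']

theorem castCell_neg' {a b : ℕ} (e : a = b) (X : P.PreCell a) (j : ℕ) (h : j ≤ b)
    (h' : j ≤ a) : (P.castCell e X).neg j h = X.neg j h' := by subst e; rfl

theorem unitIter_neg_top' {m : ℕ} (X : P.PreCell m) (d : ℕ) {i : ℕ} (hi : m < i) :
    ∀ (h : i ≤ m + d), (P.unitIter d X).neg i h = ∅ := by
  induction d with
  | zero => intro h; exact absurd h (by omega)
  | succ d ih =>
    intro h
    show (P.unitCell (P.unitIter d X)).neg i h = ∅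
    by_cases h' : i ≤ m + d
    · have e : (P.unitCell (P.unitIter d X)).neg i h = (P.unitIter d X).neg i h' := by
        dsimp only [OHG.unitCell]; rw [dif_pos h']
      rw [e]; exact ih h'
    · have e : (P.unitCell (P.unitIter d X)).neg i h
          = P.castSet (by omega : m + d + 1 = i) ∅ := by
        dsimp only [OHG.unitCell]; rw [dif_neg h']
      rw [e]; exact P.castSet_empty' _

theorem liftTo_neg_top' {a b : ℕ} (hab : a < b) (X : P.PreCell a) (h : a ≤ b)
    (hb : b ≤ b) : (P.liftTo h X).neg b hb = ∅ := by
  unfold liftTo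
  rw [P.castCell_neg' _ _ b hb (by omega : b ≤ a + (b - a))]
  exact P.unitIter_neg_top' X (b - a) hab _

theorem compAt_neg_top' {n : ℕ} (A B : P.PreCell (n + 1)) (h : n < n + 1)
    (hh : n + 1 ≤ n + 1) :
    (P.compAt n h A B).neg (n + 1) hh = A.neg (n + 1) hh ∪ B.neg (n + 1) hh := by
  dsimp only [OHG.compAt]; rw [if_pos (by omega : n < n + 1)]

theorem compAt_neg_n' {n : ℕ} (A B : P.PreCell (n + 1)) (h : n < n + 1)
    (hh : n ≤ n + 1) : (P.compAt n h A B).neg n hh = A.neg n hh := by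
  dsimp only [OHG.compAt]; rw [if_neg (by omega : ¬ n < n)]

theorem compAt_neg_lt' {m n : ℕ} (A B : P.PreCell (n + 1)) (h : m < n + 1)
    (hm : m < n) (hh : n ≤ n + 1) :
    (P.compAt m h A B).neg n hh = A.neg n hh ∪ B.neg n hh := by
  dsimp only [OHG.compAt]; rw [if_pos hm]

theorem evalAux_top' {n : ℕ} (E : P.Context n) (x : P.gen (n + 1)) :
    ∀ (m : ℕ) (hm : m ≤ n) (h : n + 1 ≤ n + 1),
      (P.evalAux E x m hm).neg (n + 1) h = {x} := by
  intro m
  induction m with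
  | zero =>
    intro hm h
    exact P.atomSide_self' x false h
  | succ m ih =>
    intro hm h
    show (P.compAt m (by omega)
        (P.compAt m (by omega)
          (P.liftTo (by omega) (E.left m hm))
          (P.evalAux E x m (by omega)))
        (P.liftTo (by omega) (E.right m hm))).neg (n + 1) h = {x}
    have h1 : ∀ (A B : P.PreCell (n + 1)) (hc : m < n + 1),
        (P.compAt m hc A B).neg (n + 1) h = A.neg (n + 1) h ∪ B.neg (n + 1) h := by
      intro A B hc
      dsimp only [OHG.compAt]; rw [if_pos (by omega : m < n + 1)]
    rw [h1, h1, P.liftTo_neg_top' (by omega) _ _ _, P.liftTo_neg_top' (by omega) _ _ _,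
      ih (by omega) h]
    simp

theorem evalAux_src' {n : ℕ} (E : P.Context n) (x : P.gen (n + 1)) :
    ∀ (m : ℕ) (hm : m ≤ n) (h : n ≤ n + 1),
      P.src x \ P.tgt x ⊆ (P.evalAux E x m hm).neg n h := by
  intro m
  induction m with
  | zero =>
    intro hm h
    have e : (P.evalAux E x 0 hm).neg n h = P.bd false {x} := P.atomSide_pred' x false h
    rw [e]
    intro u hu
    rw [Finset.mem_sdiff] at hu
    simp only [OHG.bd, OHG.mp, OHG.setSrc, OHG.setTgt, Bool.false_eq_true, if_false,
      Finset.mem_sdiff, Finset.singleton_biUnion]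
    exact hu
  | succ m ih =>
    intro hm h
    show P.src x \ P.tgt x ⊆ (P.compAt m (by omega)
        (P.compAt m (by omega)
          (P.liftTo (by omega) (E.left m hm))
          (P.evalAux E x m (by omega)))
        (P.liftTo (by omega) (E.right m hm))).neg n h
    rw [P.compAt_neg_lt' _ _ _ (by omega) h, P.compAt_neg_lt' _ _ _ (by omega) h]
    intro u hu
    exact Finset.mem_union_left _ (Finset.mem_union_right _ (ih (by omega) h hu))

theorem evalCtx_top' {n : ℕ} (E : P.Context n) (x : P.gen (n + 1)) (h : n + 1 ≤ n + 1) :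
    (P.evalCtx E x).neg (n + 1) h = {x} :=
  P.evalAux_top' E x n le_rfl h

theorem evalCtx_src' {n : ℕ} (E : P.Context n) (x : P.gen (n + 1)) (h : n ≤ n + 1) :
    P.src x \ P.tgt x ⊆ (P.evalCtx E x).neg n h :=
  P.evalAux_src' E x n le_rfl h

end OHG

/-- If an `(n+1)`-cell `X` is written as an `n`-composite
`E₀[x₀] ∘ₙ ⋯ ∘ₙ E_k[x_k]` of atoms in contexts (with all the partial composites `W i`
being genuine composites of cells), then `x_i ◁_U x_j` implies `i < j`, where
`U = {x₀, …, x_k}`: the enumeration is a linear extension of `(U, ◁_U)`. -/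
theorem statement19 (P : OHG)
    (hF0 : P.NonEmptySrcTgt) (hF1 : P.Acyclic) (hF2 : P.Relevant)
    (hF3 : ∀ (m : ℕ) (x : P.gen m), P.SegmentCond x)
    (n k : ℕ)
    (xs : Fin (k + 1) → P.gen (n + 1)) (Es : Fin (k + 1) → P.Context n)
    (W : Fin (k + 1) → P.PreCell (n + 1))
    (hW0 : W 0 = P.evalCtx (Es 0) (xs 0))
    (hWs : ∀ i : Fin k,
      P.ComposableAt n (by omega) (W i.castSucc) (P.evalCtx (Es i.succ) (xs i.succ)) ∧
      W i.succ = P.compAt n (by omega) (W i.castSucc) (P.evalCtx (Es i.succ) (xs i.succ)))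
    (hWcell : ∀ i : Fin (k + 1), P.IsCell (W i)) :
    ∀ i j : Fin (k + 1),
      P.tl (Finset.image xs Finset.univ) (xs i) (xs j) → i < j := by
  classical
  -- no self-loops, by acyclicity
  have noself : ∀ x : P.gen (n + 1), P.tgt x ∩ P.src x = ∅ := by
    intro x
    by_contra hne
    exact hF1 n x (Relation.TransGen.single (Finset.nonempty_iff_ne_empty.mpr hne))
  -- characterization of the top set of the partial composites
  have Wtop : ∀ (m : ℕ) (hm : m < k + 1) (g : P.gen (n + 1)),
      g ∈ (W ⟨m, hm⟩).neg (n + 1) le_rfl ↔ ∃ c : Fin (k + 1), c.1 ≤ m ∧ xs c = g := by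
    intro m
    induction m with
    | zero =>
      intro hm g
      have h0 : (⟨0, hm⟩ : Fin (k + 1)) = 0 := by ext; simp
      rw [h0, hW0, P.evalCtx_top' _ _ le_rfl, Finset.mem_singleton]
      constructor
      · rintro rfl; exact ⟨0, by simp, rfl⟩
      · rintro ⟨c, hc, rfl⟩
        have : c = 0 := by ext; simpa using Nat.le_zero.mp hc
        rw [this]
    | succ m ih =>
      intro hm g
      have hmk : m < k := by omega
      have hws := (hWs ⟨m, hmk⟩).2
      have hcast : (Fin.castSucc ⟨m, hmk⟩ : Fin (k + 1)) = ⟨m, by omega⟩ := by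
        ext; simp
      have hsucc : (Fin.succ ⟨m, hmk⟩ : Fin (k + 1)) = ⟨m + 1, hm⟩ := by
        ext; simp
      rw [hcast, hsucc] at hws
      rw [hws, P.compAt_neg_top' _ _ _ _, Finset.mem_union, ih (by omega) g,
        P.evalCtx_top' _ _ le_rfl, Finset.mem_singleton]
      constructor
      · rintro (⟨c, hc, rfl⟩ | h)
        · exact ⟨c, by omega, rfl⟩
        · exact ⟨⟨m + 1, hm⟩, by simp, h.symm⟩
      · rintro ⟨c, hc, rfl⟩
        by_cases hcm : c.1 ≤ m
        · exact Or.inl ⟨c, hcm, rfl⟩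
        · have : c = ⟨m + 1, hm⟩ := by ext; simp; omega
          exact Or.inr (by rw [this])
  -- the key lemma: no generator of a later factor points back
  have key : ∀ (i : Fin k),
      xs i.succ ∉ (W i.castSucc).neg (n + 1) le_rfl ∧
      ∀ y ∈ (W i.castSucc).neg (n + 1) le_rfl, P.tgt (xs i.succ) ∩ P.src y = ∅ := by
    intro i
    have hcomp : (W i.castSucc).pos n (by omega)
        = (P.evalCtx (Es i.succ) (xs i.succ)).neg n (by omega) := (hWs i).1.1
    have hWsucc : W i.succ
        = P.compAt n (by omega) (W i.castSucc) (P.evalCtx (Es i.succ) (xs i.succ)) :=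
      (hWs i).2
    have hYm := ((hWcell i.castSucc).2 n le_rfl).1
    -- source of xs i.succ sits in the positive n-boundary of W i.castSucc
    have srcz : P.src (xs i.succ) ⊆ (W i.castSucc).pos n (by omega) := by
      intro u hu
      rw [hcomp]
      apply P.evalCtx_src' (Es i.succ) (xs i.succ) (by omega)
      rw [Finset.mem_sdiff]
      refine ⟨hu, fun hu' => ?_⟩
      have hmem : u ∈ P.tgt (xs i.succ) ∩ P.src (xs i.succ) :=
        Finset.mem_inter.mpr ⟨hu', hu⟩
      rw [noself (xs i.succ)] at hmem
      exact Finset.notMem_empty u hmem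
    have parta : xs i.succ ∉ (W i.castSucc).neg (n + 1) le_rfl := by
      intro hzT
      obtain ⟨u, hu⟩ := (hF0 n (xs i.succ)).1
      have hupos : u ∈ (W i.castSucc).pos n (by omega) := srcz hu
      have h1 := hYm.1
      have hupos' : u ∈ ((W i.castSucc).neg n (by omega)
          ∪ P.setTgt ((W i.castSucc).neg (n + 1) le_rfl))
          \ P.setSrc ((W i.castSucc).neg (n + 1) le_rfl) := by
        rw [← h1]; exact hupos
      rw [Finset.mem_sdiff] at hupos'
      exact hupos'.2 (Finset.mem_biUnion.mpr ⟨xs i.succ, hzT, hu⟩)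
    refine ⟨parta, ?_⟩
    intro y hyT
    by_contra hne
    obtain ⟨u, hu⟩ := Finset.nonempty_iff_ne_empty.mpr hne
    rw [Finset.mem_inter] at hu
    have hW'm := ((hWcell i.succ).2 n le_rfl).1
    have hS : (W i.succ).neg (n + 1) le_rfl
        = (W i.castSucc).neg (n + 1) le_rfl ∪ {xs i.succ} := by
      rw [hWsucc, P.compAt_neg_top' _ _ _ _, P.evalCtx_top' _ _ le_rfl]
    have hWneg : (W i.succ).neg n (by omega) = (W i.castSucc).neg n (by omega) := by
      rw [hWsucc]; exact P.compAt_neg_n' _ _ _ _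
    -- u is a target of some element of the big set S
    have huS : u ∈ P.setTgt ((W i.succ).neg (n + 1) le_rfl) := by
      rw [hS]
      exact Finset.mem_biUnion.mpr ⟨xs i.succ, by simp, hu.1⟩
    -- hence u is not in the negative n-boundary
    have hunotneg : u ∉ (W i.castSucc).neg n (by omega) := by
      intro hmem
      have hmem' : u ∈ ((W i.succ).pos n (by omega)
          ∪ P.setSrc ((W i.succ).neg (n + 1) le_rfl))
          \ P.setTgt ((W i.succ).neg (n + 1) le_rfl) := by
        rw [← hW'm.2, hWneg]; exact hmem
      rw [Finset.mem_sdiff] at hmem'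
      exact hmem'.2 huS
    -- so, since u ∈ T⁻, u must be in T⁺
    have huTp : u ∈ P.setTgt ((W i.castSucc).neg (n + 1) le_rfl) := by
      by_contra hun
      apply hunotneg
      have : u ∈ ((W i.castSucc).pos n (by omega)
          ∪ P.setSrc ((W i.castSucc).neg (n + 1) le_rfl))
          \ P.setTgt ((W i.castSucc).neg (n + 1) le_rfl) := by
        rw [Finset.mem_sdiff]
        exact ⟨Finset.mem_union_right _ (Finset.mem_biUnion.mpr ⟨y, hyT, hu.2⟩), hun⟩
      rw [← hYm.2] at this
      exact this
    obtain ⟨y', hy'T, huy'⟩ := Finset.mem_biUnion.mp huTp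
    -- fork-freeness of the big set S
    have hFF := ((hWcell i.succ).1 (n + 1) le_rfl).1
    have hy'S : y' ∈ (W i.succ).neg (n + 1) le_rfl := by
      rw [hS]; exact Finset.mem_union_left _ hy'T
    have hzS : xs i.succ ∈ (W i.succ).neg (n + 1) le_rfl := by
      rw [hS]; simp
    by_cases hyz : y' = xs i.succ
    · exact parta (hyz ▸ hy'T)
    · have hdisj := (hFF y' hy'S (xs i.succ) hzS hyz).2
      have : u ∈ P.tgt y' ∩ P.tgt (xs i.succ) := Finset.mem_inter.mpr ⟨huy', hu.1⟩
      rw [hdisj] at this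
      exact Finset.notMem_empty u this
  -- every elementary step goes strictly forward
  have edge : ∀ a b : Fin (k + 1), (P.tgt (xs a) ∩ P.src (xs b)).Nonempty → a < b := by
    intro a b hab
    by_contra hle
    rw [not_lt] at hle
    rcases eq_or_lt_of_le hle with heq | hlt
    · subst heq
      obtain ⟨u, hu⟩ := hab
      rw [noself (xs b)] at hu
      exact Finset.notMem_empty u hu
    · have ha1 : 1 ≤ a.1 := by omega
      have hak : a.1 - 1 < k := by omega
      set i : Fin k := ⟨a.1 - 1, hak⟩ with hi
      have hisucc : i.succ = a := by ext; simp [hi]; omega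
      have hics : i.castSucc = (⟨a.1 - 1, by omega⟩ : Fin (k + 1)) := by ext; simp [hi]
      have hmem : xs b ∈ (W i.castSucc).neg (n + 1) le_rfl := by
        rw [hics]
        exact (Wtop (a.1 - 1) (by omega) (xs b)).mpr ⟨b, by omega, rfl⟩
      have hzero := (key i).2 (xs b) hmem
      rw [hisucc] at hzero
      obtain ⟨u, hu⟩ := hab
      rw [hzero] at hu
      exact Finset.notMem_empty u hu
  -- conclude by induction over the transitive closure
  intro i j hij
  have main : ∀ y, Relation.TransGen (P.tlone (Finset.image xs Finset.univ)) (xs i) y →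
      ∀ b : Fin (k + 1), xs b = y → i < b := by
    intro y hy
    induction hy with
    | single h1 =>
      intro b hb
      exact edge i b (by rw [hb]; exact h1.2.2)
    | tail h1 h2 ih =>
      intro b hb
      obtain ⟨c, _, hc⟩ := Finset.mem_image.mp h2.1
      exact lt_trans (ih c hc) (edge c b (by rw [hc, hb]; exact h2.2.2))
  exact main (xs j) hij j rfl
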